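/- arXiv:2505.04267 — 6 statements merged into one kernel-verified Lean document; each statement's English description precedes it below -/
import Mathlib

section
/- Let X be a normed space and D an r-dense additive subgroup of X. Then D is contained in 2D + Z, where Z is the closed linear span of D ∩ 2rB_X. Equivalently, for every d ∈ D there exists g ∈ D with d - 2g ∈ Z. -/
/-- If `D` is an `r`-dense subgroup of a normed space `X`, then `D ⊆ 2D + Z`,
where `Z` is the closed linear span of the elements of `D` of norm at most `2r`. -/
theorem stmt_10 {X : Type*} [NormedAddCommGroup X] [NormedSpace ℝ X]
    (D : AddSubgroup X) (r : ℝ)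
    (hdense : ∀ x : X, ∃ d ∈ D, ‖x - d‖ ≤ r) :
    ∀ d ∈ D, ∃ g ∈ D,
      d - 2 • g ∈ closure (Submodule.span ℝ ((D : Set X) ∩ Metric.closedBall 0 (2 * r)) : Set X) := by
  intro d hd
  obtain ⟨g, hg, hng⟩ := hdense ((1/2 : ℝ) • d)
  refine ⟨g, hg, subset_closure (Submodule.subset_span ⟨?_, ?_⟩)⟩
  · exact D.sub_mem hd (D.nsmul_mem hg 2)
  · rw [Metric.mem_closedBall, dist_zero_right]
    have : d - 2 • g = (2 : ℝ) • ((1/2 : ℝ) • d - g) := by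
      rw [smul_sub, smul_smul]
      norm_num
      module
    rw [this, norm_smul]
    simp only [Real.norm_ofNat]
    linarith
end

section
/- Let W be an infinite subset of a normed space X and r > 0. If for every w ∈ W the set of points of W within distance r of w has cardinality strictly less than |W|, then W contains an infinite subset whose distinct elements are at pairwise distance strictly greater than r. -/
private def chainAux {X : Type*} [DecidableEq X] (pick : Finset X → X) : ℕ → Finset X
  | 0 => ∅
  | n + 1 => insert (pick (chainAux pick n)) (chainAux pick n)

/-- If every ball of radius `r` centred at a point of the infinite set `W`
contains strictly fewer than `|W|` points of `W`, then `W` contains an infinite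
`(r+)`-separated subset. -/
theorem stmt_11 {X : Type*} [NormedAddCommGroup X] [NormedSpace ℝ X]
    (W : Set X) (hW : W.Infinite) (r : ℝ) (hr : 0 < r)
    (hsmall : ∀ w ∈ W, Cardinal.mk ↥(W ∩ Metric.closedBall w r) < Cardinal.mk ↥W) :
    ∃ f : ℕ → X, (∀ n, f n ∈ W) ∧ ∀ n m : ℕ, n ≠ m → r < ‖f n - f m‖ := by
  classical
  have hinf : Cardinal.aleph0 ≤ Cardinal.mk ↥W := by
    have := hW.to_subtype
    exact Cardinal.infinite_iff.mp this
  have key : ∀ s : Finset X, ↑s ⊆ W → ∃ w ∈ W, ∀ v ∈ s, r < ‖w - v‖ := by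
    intro s hs
    have hcard : ∀ s : Finset X, ↑s ⊆ W →
        Cardinal.mk ↥(W ∩ ⋃ v ∈ (s : Set X), Metric.closedBall v r) < Cardinal.mk ↥W := by
      intro s
      induction s using Finset.induction with
      | empty =>
        intro _
        simp only [Finset.coe_empty, Set.mem_empty_iff_false, Set.iUnion_of_empty,
          Set.iUnion_empty, Set.inter_empty, Cardinal.mk_emptyCollection]
        exact lt_of_lt_of_le Cardinal.aleph0_pos hinf
      | insert _ _ hnot ih =>
        rename_i a t
        intro hsub
        have haW : a ∈ W := hsub (Finset.mem_insert_self a t)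
        have htW : ↑t ⊆ W := fun x hx => hsub (Finset.mem_insert_of_mem hx)
        have hU : (W ∩ ⋃ v ∈ ((insert a t : Finset X) : Set X), Metric.closedBall v r)
            ⊆ (W ∩ Metric.closedBall a r) ∪ (W ∩ ⋃ v ∈ (t : Set X), Metric.closedBall v r) := by
          intro x hx
          obtain ⟨hxW, hxU⟩ := hx
          simp only [Finset.coe_insert, Set.mem_iUnion, Set.mem_insert_iff] at hxU
          obtain ⟨v, hv, hxv⟩ := hxU
          rcases hv with rfl | hv
          · exact Or.inl ⟨hxW, hxv⟩
          · exact Or.inr ⟨hxW, Set.mem_biUnion hv hxv⟩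
        calc Cardinal.mk ↥(W ∩ ⋃ v ∈ ((insert a t : Finset X) : Set X), Metric.closedBall v r)
            ≤ Cardinal.mk ↥((W ∩ Metric.closedBall a r)
              ∪ (W ∩ ⋃ v ∈ (t : Set X), Metric.closedBall v r)) := Cardinal.mk_le_mk_of_subset hU
          _ ≤ Cardinal.mk ↥(W ∩ Metric.closedBall a r)
              + Cardinal.mk ↥(W ∩ ⋃ v ∈ (t : Set X), Metric.closedBall v r) :=
              Cardinal.mk_union_le _ _
          _ < Cardinal.mk ↥W := Cardinal.add_lt_of_lt hinf (hsmall a haW) (ih htW)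
    have hlt := hcard s hs
    have hne : ¬ W ⊆ (⋃ v ∈ (s : Set X), Metric.closedBall v r) := by
      intro hsub
      rw [Set.inter_eq_left.mpr hsub] at hlt
      exact lt_irrefl _ hlt
    obtain ⟨w, hwW, hwU⟩ := Set.not_subset.mp hne
    refine ⟨w, hwW, fun v hv => ?_⟩
    have : w ∉ Metric.closedBall v r := fun h => hwU (Set.mem_biUnion hv h)
    rw [Metric.mem_closedBall, not_le, dist_eq_norm] at this
    exact this
  have key' : ∀ s : Finset X, ∃ w, ↑s ⊆ W → w ∈ W ∧ ∀ v ∈ s, r < ‖w - v‖ := by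
    intro s
    by_cases hs : ↑s ⊆ W
    · obtain ⟨w, hw1, hw2⟩ := key s hs
      exact ⟨w, fun _ => ⟨hw1, hw2⟩⟩
    · exact ⟨0, fun h => absurd h hs⟩
  choose pick hpick using key'
  set F : ℕ → Finset X := chainAux pick with hF
  have hFW : ∀ n, ↑(F n) ⊆ W := by
    intro n
    induction n with
    | zero => simp [hF, chainAux]
    | succ n ih =>
      intro x hx
      simp only [hF, chainAux, Finset.coe_insert, Set.mem_insert_iff] at hx
      rcases hx with rfl | hx
      · exact (hpick (F n) ih).1
      · exact ih hx
  have hFmono : ∀ n m, n ≤ m → F n ⊆ F m := by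
    intro n m hnm
    induction hnm with
    | refl => exact Finset.Subset.refl _
    | step _ ih => exact ih.trans (Finset.subset_insert _ _)
  set f : ℕ → X := fun n => pick (F n) with hf
  have hmem : ∀ n, f n ∈ F (n + 1) := fun n => Finset.mem_insert_self _ _
  have hsep : ∀ n m, n < m → r < ‖f m - f n‖ := by
    intro n m hnm
    exact (hpick (F m) (hFW m)).2 (f n) (hFmono (n + 1) m hnm (hmem n))
  refine ⟨f, fun n => (hpick (F n) (hFW n)).1, fun n m hne => ?_⟩
  rcases lt_or_gt_of_ne hne with h | h
  · rw [norm_sub_rev]; exact hsep n m h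
  · exact hsep m n h
end

section
/- Let D be an r-dense additive subgroup of a normed space X. Then for every ε > 0, D is generated (as a group) by the set D ∩ (2r + ε)B_X of its elements of norm at most 2r + ε. -/
/-- An `r`-dense subgroup `D` of a normed space is generated by its elements
of norm at most `2r + ε`, for every `ε > 0`. -/
theorem stmt_12 {X : Type*} [NormedAddCommGroup X] [NormedSpace ℝ X]
    (D : AddSubgroup X) (r : ℝ)
    (hdense : ∀ x : X, ∃ d ∈ D, ‖x - d‖ ≤ r)
    (ε : ℝ) (hε : 0 < ε) :
    D = AddSubgroup.closure ((D : Set X) ∩ Metric.closedBall 0 (2 * r + ε)) := by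
  obtain ⟨d0, hd0, hd0n⟩ := hdense 0
  have hr : 0 ≤ r := le_trans (norm_nonneg _) hd0n
  apply le_antisymm
  · intro d hd
    -- strong induction on n with ‖d‖ ≤ 2r + ε + n • ε
    have key : ∀ n : ℕ, ∀ d : X, d ∈ D → ‖d‖ ≤ 2 * r + ε + n * ε →
        d ∈ AddSubgroup.closure ((D : Set X) ∩ Metric.closedBall 0 (2 * r + ε)) := by
      intro n
      induction n with
      | zero =>
        intro d hd hdn
        exact AddSubgroup.subset_closure ⟨hd, by
          simpa [Metric.mem_closedBall, dist_eq_norm] using hdn.trans_eq (by ring)⟩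
      | succ n ih =>
        intro d hd hdn
        by_cases h : ‖d‖ ≤ 2 * r + ε
        · exact AddSubgroup.subset_closure ⟨hd, by
            simpa [Metric.mem_closedBall, dist_eq_norm] using h⟩
        push_neg at h
        have hdpos : 0 < ‖d‖ := lt_of_le_of_lt (by positivity) h
        set c : ℝ := (r + ε) / ‖d‖ with hc
        have hc0 : 0 < c := by positivity
        have hc1 : c ≤ 1 := by
          rw [hc, div_le_one hdpos]
          nlinarith
        set x : X := (1 - c) • d with hx
        have hdx : ‖d - x‖ = r + ε := by
          have : d - x = c • d := by
            rw [hx]; rw [sub_smul, one_smul]; abel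
          rw [this, norm_smul, Real.norm_eq_abs, abs_of_pos hc0, hc,
            div_mul_cancel₀ _ (ne_of_gt hdpos)]
        have hxn : ‖x‖ = ‖d‖ - (r + ε) := by
          rw [hx, norm_smul, Real.norm_eq_abs, abs_of_nonneg (by linarith), sub_mul,
            one_mul, hc, div_mul_cancel₀ _ (ne_of_gt hdpos)]
        obtain ⟨d', hd', hd'n⟩ := hdense x
        have hgen : d - d' ∈ AddSubgroup.closure ((D : Set X) ∩ Metric.closedBall 0 (2 * r + ε)) := by
          apply AddSubgroup.subset_closure
          refine ⟨sub_mem hd hd', ?_⟩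
          simp only [Metric.mem_closedBall, dist_eq_norm, sub_zero]
          calc ‖d - d'‖ ≤ ‖d - x‖ + ‖x - d'‖ := norm_sub_le_norm_sub_add_norm_sub d x d'
            _ ≤ (r + ε) + r := by rw [hdx]; linarith
            _ = 2 * r + ε := by ring
        have hd'small : ‖d'‖ ≤ 2 * r + ε + n * ε := by
          have : ‖d'‖ ≤ ‖x‖ + ‖x - d'‖ := by
            calc ‖d'‖ = ‖x - (x - d')‖ := by congr 1; abel
              _ ≤ ‖x‖ + ‖x - d'‖ := norm_sub_le _ _
          rw [hxn] at this
          push_cast at hdn ⊢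
          nlinarith
        have := ih d' hd' hd'small
        have : (d - d') + d' ∈ AddSubgroup.closure ((D : Set X) ∩ Metric.closedBall 0 (2 * r + ε)) :=
          add_mem hgen this
        simpa using this
    obtain ⟨n, hn⟩ := exists_nat_ge ((‖d‖ - (2 * r + ε)) / ε)
    have : ‖d‖ ≤ 2 * r + ε + n * ε := by
      rw [div_le_iff₀ hε] at hn
      linarith
    exact key n d hd this
  · rw [AddSubgroup.closure_le]
    exact Set.inter_subset_left
end

section
/- Every infinite-dimensional normed space X contains, for every ε > 0, an additive subgroup D that is 1-separated (distinct elements at distance ≥ 1) and (1+ε)-dense (every point of X within distance 1+ε of D). -/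
open Cardinal Set Submodule in
private theorem riesz_step {X : Type*} [NormedAddCommGroup X] [NormedSpace ℝ X]
    (F : Submodule ℝ X) (hF : F.topologicalClosure ≠ ⊤) {ε : ℝ} (hε : 0 < ε) :
    ∃ u : X, ‖u‖ ≤ 1 + ε ∧ ∀ z ∈ F, 1 ≤ ‖u - z‖ := by
  have hcl : IsClosed (F.topologicalClosure : Set X) := F.isClosed_topologicalClosure
  have hex : ∃ x : X, x ∉ F.topologicalClosure := by
    by_contra h
    push_neg at h
    exact hF (Submodule.eq_top_iff'.2 h)
  have hr : (1 + ε)⁻¹ < 1 := by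
    rw [inv_lt_one_iff₀]; right; linarith
  obtain ⟨x₀, hx₀, hx⟩ := riesz_lemma (𝕜 := ℝ) hcl hex hr
  have hx₀0 : x₀ ≠ 0 := fun h => hx₀ (h ▸ Submodule.zero_mem _)
  have hn : 0 < ‖x₀‖ := norm_pos_iff.2 hx₀0
  have h1ε : (0:ℝ) < 1 + ε := by linarith
  set c : ℝ := ((1 + ε)⁻¹ * ‖x₀‖)⁻¹ with hcdef
  have hc : 0 < c := by positivity
  refine ⟨c • x₀, ?_, ?_⟩
  · rw [norm_smul, Real.norm_eq_abs, abs_of_pos hc, hcdef, mul_inv, inv_inv,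
      mul_assoc, inv_mul_cancel₀ hn.ne', mul_one]
  · intro z hz
    have hz' : c⁻¹ • z ∈ F.topologicalClosure :=
      Submodule.smul_mem _ _ (Submodule.le_topologicalClosure F hz)
    have h2 := hx _ hz'
    have key : c • x₀ - z = c • (x₀ - c⁻¹ • z) := by
      rw [smul_sub, smul_inv_smul₀ hc.ne']
    calc (1:ℝ) = c * ((1+ε)⁻¹ * ‖x₀‖) := (inv_mul_cancel₀ (by positivity)).symm
    _ ≤ c * ‖x₀ - c⁻¹ • z‖ := mul_le_mul_of_nonneg_left h2 hc.le
    _ = ‖c • x₀ - z‖ := by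
        rw [key, norm_smul, Real.norm_eq_abs, abs_of_pos hc]

open Cardinal Set Submodule in
private theorem small_span_ne_top {X : Type u} [NormedAddCommGroup X] [NormedSpace ℝ X]
    (hinf : ¬ FiniteDimensional ℝ X)
    (S : Set X) (hmin : ∀ t : Set X, Dense t → #S ≤ #t)
    (T : Set X) (hT : #T < #S) : (span ℝ T).topologicalClosure ≠ ⊤ := by
  intro htop
  by_cases hfin : T.Finite
  · have hfd : FiniteDimensional ℝ (span ℝ T) := FiniteDimensional.span_of_finite ℝ hfin
    have hclosed : IsClosed ((span ℝ T : Submodule ℝ X) : Set X) :=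
      Submodule.closed_of_finiteDimensional _
    rw [hclosed.submodule_topologicalClosure_eq] at htop
    have h2 : FiniteDimensional ℝ (⊤ : Submodule ℝ X) := htop ▸ hfd
    exact hinf (Submodule.topEquiv.finiteDimensional)
  · have hTinf : T.Infinite := hfin
    set R : Set X := Set.range (fun p : ℚ × T => (p.1 : ℝ) • (p.2 : X)) with hR
    have hTR : T ⊆ R := by
      intro t ht
      exact ⟨((1 : ℚ), ⟨t, ht⟩), by simp⟩
    set A : AddSubmonoid X := AddSubmonoid.closure R with hA
    have hqA : ∀ (q : ℚ) (a : X), a ∈ A → (q : ℝ) • a ∈ A := by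
      intro q a ha
      induction ha using AddSubmonoid.closure_induction with
      | mem x hx =>
        obtain ⟨⟨p, t⟩, rfl⟩ := hx
        refine AddSubmonoid.subset_closure ⟨(q * p, t), ?_⟩
        push_cast
        rw [mul_smul]
      | zero => simpa using A.zero_mem
      | add x y _ _ hx hy => rw [smul_add]; exact A.add_mem hx hy
    have hclA : ∀ (r : ℝ) (a : X), a ∈ closure (A : Set X) → r • a ∈ closure (A : Set X) := by
      intro r a ha
      have hqcl : ∀ q : ℚ, (q : ℝ) • a ∈ closure (A : Set X) := by
        intro q
        have hc : Continuous fun z : X => (q : ℝ) • z := continuous_const_smul _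
        have := (image_closure_subset_closure_image hc) ⟨a, ha, rfl⟩
        refine closure_mono ?_ this
        rintro _ ⟨b, hb, rfl⟩
        exact hqA q b hb
      have hCclosed : IsClosed {c : ℝ | c • a ∈ closure (A : Set X)} :=
        IsClosed.preimage (continuous_id.smul continuous_const) isClosed_closure
      have hsub : range ((↑) : ℚ → ℝ) ⊆ {c : ℝ | c • a ∈ closure (A : Set X)} := by
        rintro _ ⟨q, rfl⟩; exact hqcl q
      have hdense : Dense (range ((↑) : ℚ → ℝ)) := Rat.denseRange_cast
      have huniv : (univ : Set ℝ) ⊆ {c : ℝ | c • a ∈ closure (A : Set X)} := by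
        rw [← hCclosed.closure_eq]
        calc (univ : Set ℝ) = closure (range ((↑) : ℚ → ℝ)) := hdense.closure_eq.symm
        _ ⊆ closure {c : ℝ | c • a ∈ closure (A : Set X)} := closure_mono hsub
      exact huniv (mem_univ r)
    have hspan : (span ℝ T : Set X) ⊆ closure (A : Set X) := by
      intro z hz
      induction hz using Submodule.span_induction with
      | mem x hx => exact subset_closure (AddSubmonoid.subset_closure (hTR hx))
      | zero => exact subset_closure A.zero_mem
      | add x y _ _ hx hy => exact (AddSubmonoid.topologicalClosure A).add_mem hx hy
      | smul r x _ hx => exact hclA r x hx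
    have hdenseA : Dense (A : Set X) := by
      rw [dense_iff_closure_eq]
      apply eq_univ_of_univ_subset
      have h1 : (univ : Set X) = closure (span ℝ T : Set X) := by
        rw [← Submodule.topologicalClosure_coe, htop]; rfl
      rw [h1]
      calc closure (span ℝ T : Set X) ⊆ closure (closure (A : Set X)) := closure_mono hspan
      _ = closure (A : Set X) := closure_closure
    -- cardinality bound
    have hRinf : R.Infinite := hTinf.mono hTR
    have : Infinite ↥R := hRinf.to_subtype
    have : Infinite ↥T := hTinf.to_subtype
    set f : List ↥R → X := fun l => (l.map Subtype.val).sum with hf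
    have hAsub : (A : Set X) ⊆ range f := by
      have : A ≤ { carrier := range f,
                   zero_mem' := ⟨[], by simp [hf]⟩,
                   add_mem' := by
                     rintro _ _ ⟨l1, rfl⟩ ⟨l2, rfl⟩
                     exact ⟨l1 ++ l2, by simp [hf]⟩ } := by
        rw [hA]
        apply AddSubmonoid.closure_le.2
        intro x hx
        exact ⟨[⟨x, hx⟩], by simp [hf]⟩
      exact this
    have hcard : #(A : Set X) ≤ #T := by
      calc #(A : Set X) ≤ #(range f) := mk_le_mk_of_subset hAsub
      _ ≤ #(List ↥R) := mk_range_le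
      _ = #↥R := mk_list_eq_mk _
      _ ≤ #(ℚ × ↥T) := mk_range_le
      _ = ℵ₀ * #↥T := by simp [Cardinal.mk_prod]
      _ = #↥T := by
          rw [Cardinal.mul_eq_max (le_refl _) (Cardinal.infinite_iff.1 ‹Infinite ↥T›)]
          exact max_eq_right (Cardinal.infinite_iff.1 ‹Infinite ↥T›)
    exact absurd (hmin _ hdenseA) (not_le.2 (lt_of_le_of_lt hcard hT))

open Cardinal Set Submodule in
private theorem main_aux {X : Type u} [NormedAddCommGroup X] [NormedSpace ℝ X]
    (hinf : ¬ FiniteDimensional ℝ X) (ε : ℝ) (hε : 0 < ε)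
    (S : Set X) (hS : Dense S) (hmin : ∀ t : Set X, Dense t → #S ≤ #t)
    (hℵ : ℵ₀ ≤ #S) :
    ∃ D : AddSubgroup X,
      (∀ d ∈ D, ∀ h ∈ D, d ≠ h → 1 ≤ ‖d - h‖) ∧
      (∀ x : X, ∃ d ∈ D, ‖x - d‖ ≤ 1 + ε) := by
  classical
  set ι := (#S).ord.ToType with hι
  have hcard : #ι = #S := by rw [hι, mk_toType, card_ord]
  obtain ⟨e⟩ := Cardinal.eq.1 hcard
  set x : ι → X := fun i => ((e i : S) : X) with hx
  have hxrange : range x = S := by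
    ext z
    constructor
    · rintro ⟨i, rfl⟩; exact (e i).2
    · intro hz; exact ⟨e.symm ⟨z, hz⟩, by simp [hx]⟩
  have hIio : ∀ a : ι, #(Iio a) < #S := fun a => Cardinal.mk_Iio_ord_toType a
  have hε2 : (0:ℝ) < ε / 2 := by linarith
  have key : ∀ (a : ι) (g : (b : ι) → b < a → X),
      ∃ u : X, ‖u‖ ≤ 1 + ε/2 ∧
        ∀ z ∈ span ℝ ((range fun b : Iio a => g b.1 b.2) ∪ {x a}), 1 ≤ ‖u - z‖ := by
    intro a g
    refine riesz_step _ ?_ hε2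
    refine small_span_ne_top hinf S hmin _ ?_
    calc #((range fun b : Iio a => g b.1 b.2) ∪ {x a} : Set X)
        ≤ #(range fun b : Iio a => g b.1 b.2) + #({x a} : Set X) := mk_union_le _ _
      _ ≤ #(Iio a) + 1 := by
          gcongr
          · exact mk_range_le
          · simp
      _ < #S := add_lt_of_lt hℵ (hIio a) (lt_of_lt_of_le one_lt_aleph0 hℵ)
  have wf : WellFounded ((· < ·) : ι → ι → Prop) := wellFounded_lt
  set y : ι → X := wf.fix (fun a g => x a + Classical.choose (key a g)) with hy
  have hyval : ∀ a, y a = x a + Classical.choose (key a (fun b _ => y b)) := by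
    intro a
    rw [hy]
    exact wf.fix_eq _ a
  have hu : ∀ a : ι, ‖y a - x a‖ ≤ 1 + ε/2 ∧
      ∀ z ∈ span ℝ ((y '' Iio a) ∪ {x a}), 1 ≤ ‖(y a - x a) - z‖ := by
    intro a
    have hspec := Classical.choose_spec (key a (fun b _ => y b))
    have h1 : y a - x a = Classical.choose (key a (fun b _ => y b)) := by
      rw [hyval a]; abel
    have h2 : (range fun b : Iio a => y b.1) = y '' Iio a := by
      rw [Set.image_eq_range]
    rw [h1, ← h2]
    exact hspec
  refine ⟨AddSubgroup.closure (range y), ?_, ?_⟩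
  · -- separation
    have hsep : ∀ d ∈ AddSubgroup.closure (range y), d ≠ 0 → 1 ≤ ‖d‖ := by
      intro d hd hd0
      have hd' : d ∈ span ℤ (range y) := by
        rw [← Submodule.span_int_eq_addSubgroupClosure] at hd
        exact hd
      obtain ⟨c, hc⟩ := Finsupp.mem_span_range_iff_exists_finsupp.1 hd'
      have hcsupp : c.support.Nonempty := by
        rw [Finsupp.support_nonempty_iff]
        rintro rfl
        rw [Finsupp.sum_zero_index] at hc
        exact hd0 hc.symm
      set a := c.support.max' hcsupp with ha
      have hamem : a ∈ c.support := c.support.max'_mem hcsupp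
      have hca : c a ≠ 0 := Finsupp.mem_support_iff.1 hamem
      have hd2 : d = ∑ i ∈ c.support, c i • y i := hc.symm
      have hw : d - c a • y a = ∑ i ∈ c.support.erase a, c i • y i := by
        rw [hd2, ← Finset.add_sum_erase _ _ hamem]
        abel
      have hwmem : d - c a • y a ∈ span ℝ (y '' Iio a) := by
        rw [hw]
        apply Submodule.sum_mem
        intro i hi
        have hia : i < a :=
          lt_of_le_of_ne (Finset.le_max' _ _ (Finset.mem_of_mem_erase hi))
            (Finset.ne_of_mem_erase hi)
        rw [show (c i) • y i = ((c i : ℝ)) • y i from (Int.cast_smul_eq_zsmul ℝ _ _).symm]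
        exact Submodule.smul_mem _ _ (Submodule.subset_span ⟨i, hia, rfl⟩)
      set n : ℝ := (c a : ℝ) with hn
      have hn0 : n ≠ 0 := Int.cast_ne_zero.2 hca
      have hn1 : 1 ≤ |n| := by
        rw [hn, ← Int.cast_abs]
        exact_mod_cast Int.one_le_abs hca
      set w : X := d - c a • y a with hwdef
      have hdw : d = n • y a + w := by
        rw [hn, Int.cast_smul_eq_zsmul ℝ (c a) (y a), hwdef]
        abel
      set z : X := -(x a) - n⁻¹ • w with hz
      have hzmem : z ∈ span ℝ ((y '' Iio a) ∪ {x a}) := by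
        refine Submodule.sub_mem _ ?_ ?_
        · exact Submodule.neg_mem _ (Submodule.subset_span (Or.inr rfl))
        · exact Submodule.smul_mem _ _ (span_mono subset_union_left hwmem)
      have h5 : (y a - x a) - z = y a + n⁻¹ • w := by rw [hz]; abel
      have hfact : d = n • ((y a - x a) - z) := by
        rw [h5, smul_add, smul_inv_smul₀ hn0, ← hdw]
      have hge := (hu a).2 z hzmem
      calc (1:ℝ) ≤ |n| := hn1
        _ ≤ |n| * ‖(y a - x a) - z‖ :=
            le_mul_of_one_le_right (abs_nonneg n) hge
        _ = ‖d‖ := by rw [hfact, norm_smul, Real.norm_eq_abs]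
    intro d hd h hh hne
    exact hsep _ (AddSubgroup.sub_mem _ hd hh) (sub_ne_zero.2 hne)
  · -- density
    intro p
    obtain ⟨s, hsS, hds⟩ := Metric.mem_closure_iff.1 (hS p) (ε/2) hε2
    have : ∃ a, x a = s := by
      rw [← hxrange] at hsS
      exact hsS
    obtain ⟨a, rfl⟩ := this
    refine ⟨y a, AddSubgroup.subset_closure (mem_range_self a), ?_⟩
    have h1 : ‖p - y a‖ ≤ ‖p - x a‖ + ‖x a - y a‖ := by
      rw [show p - y a = (p - x a) + (x a - y a) by abel]
      exact norm_add_le _ _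
    have h2 : ‖p - x a‖ < ε/2 := by rwa [← dist_eq_norm]
    have h3 : ‖x a - y a‖ ≤ 1 + ε/2 := by
      rw [norm_sub_rev]
      exact (hu a).1
    linarith


/-- Every infinite-dimensional normed space contains, for every `ε > 0`, an
additive subgroup that is `1`-separated and `(1+ε)`-dense. -/
theorem stmt_14 {X : Type*} [NormedAddCommGroup X] [NormedSpace ℝ X]
    (hinf : ¬ FiniteDimensional ℝ X) (ε : ℝ) (hε : 0 < ε) :
    ∃ D : AddSubgroup X,
      (∀ d ∈ D, ∀ h ∈ D, d ≠ h → 1 ≤ ‖d - h‖) ∧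
      (∀ x : X, ∃ d ∈ D, ‖x - d‖ ≤ 1 + ε) := by
  classical
  obtain ⟨κ, ⟨S, hS, hSκ⟩, hmin'⟩ :=
    Cardinal.lt_wf.has_min {c : Cardinal | ∃ s : Set X, Dense s ∧ Cardinal.mk s = c}
      ⟨Cardinal.mk (Set.univ : Set X), Set.univ, dense_univ, rfl⟩
  have hmin : ∀ t : Set X, Dense t → Cardinal.mk S ≤ Cardinal.mk t := by
    intro t ht
    rw [hSκ]
    exact not_lt.1 (hmin' _ ⟨t, ht, rfl⟩)
  have hnt : Nontrivial X := by
    by_contra h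
    rw [not_nontrivial_iff_subsingleton] at h
    exact hinf inferInstance
  have hXinf : Infinite X := by
    obtain ⟨v, hv⟩ := exists_ne (0 : X)
    exact Infinite.of_injective (fun r : ℝ => r • v) (smul_left_injective ℝ hv)
  have hℵ : Cardinal.aleph0 ≤ Cardinal.mk S := by
    by_contra h
    rw [not_le, Cardinal.lt_aleph0_iff_set_finite] at h
    have : S = Set.univ := h.isClosed.closure_eq ▸ hS.closure_eq
    rw [this] at h
    exact (Set.infinite_univ (α := X)) h
  exact main_aux hinf ε hε S hS hmin hℵ
end

section
/- Riesz-type step for group constructions: let X be a normed space, Z a proper closed subspace of X, u ∈ Z, and x ∈ X with dist(x, Z) ≥ 1. Let D₀ ⊆ Z be an additive subgroup that is 1-separated. Then the subgroup D = D₀ + (u + x)ℤ is 1-separated. -/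
/-- Riesz-type step: if `Z` is a proper closed subspace, `u ∈ Z`,
`dist(x, Z) ≥ 1` and `D₀ ⊆ Z` is a `1`-separated subgroup, then the subgroup
`D₀ + (u + x)ℤ` is `1`-separated. -/
theorem stmt_15 {X : Type*} [NormedAddCommGroup X] [NormedSpace ℝ X]
    (Z : Submodule ℝ X) (hZclosed : IsClosed (Z : Set X)) (hZproper : Z ≠ ⊤)
    (u : X) (hu : u ∈ Z)
    (x : X) (hx : ∀ z ∈ Z, 1 ≤ ‖x - z‖)
    (D₀ : AddSubgroup X) (hD₀Z : (D₀ : Set X) ⊆ (Z : Set X))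
    (hD₀sep : ∀ d ∈ D₀, ∀ h ∈ D₀, d ≠ h → 1 ≤ ‖d - h‖) :
    ∀ d ∈ D₀, ∀ n : ℤ, ∀ d' ∈ D₀, ∀ m : ℤ,
      d + n • (u + x) ≠ d' + m • (u + x) →
      1 ≤ ‖(d + n • (u + x)) - (d' + m • (u + x))‖ := by
  intro d hd n d' hd' m hne
  rcases eq_or_ne n m with rfl | hnm
  · have hdd : d ≠ d' := by
      intro h; exact hne (by rw [h])
    have := hD₀sep d hd d' hd' hdd
    calc 1 ≤ ‖d - d'‖ := this
      _ = ‖(d + n • (u + x)) - (d' + n • (u + x))‖ := by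
        congr 1; abel
  · set k : ℤ := n - m with hk
    have hk0 : k ≠ 0 := sub_ne_zero.mpr hnm
    have hc0 : (k : ℝ) ≠ 0 := Int.cast_ne_zero.mpr hk0
    set z : X := (-(k : ℝ)⁻¹) • (d - d' + (k : ℝ) • u) with hz
    have hzZ : z ∈ Z := by
      apply Z.smul_mem
      exact Z.add_mem (Z.sub_mem (hD₀Z hd) (hD₀Z hd')) (Z.smul_mem _ hu)
    have key : (d + n • (u + x)) - (d' + m • (u + x)) = (k : ℝ) • (x - z) := by
      rw [hz, ← Int.cast_smul_eq_zsmul ℝ n, ← Int.cast_smul_eq_zsmul ℝ m]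
      have hck : (k : ℝ) = (n : ℝ) - (m : ℝ) := by rw [hk]; push_cast; ring
      have hnm' : (n:ℝ) - (m:ℝ) ≠ 0 := by rw [← hck]; exact hc0
      rw [hck]
      match_scalars <;> field_simp
    rw [key, norm_smul]
    have h1 : (1 : ℝ) ≤ |(k : ℝ)| := by
      rw [← Int.cast_abs]
      exact_mod_cast Int.one_le_abs hk0
    have h2 : 1 ≤ ‖x - z‖ := hx z hzZ
    calc (1:ℝ) = 1 * 1 := by ring
      _ ≤ ‖(k:ℝ)‖ * ‖x - z‖ := by
        apply mul_le_mul _ h2 zero_le_one (norm_nonneg _)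
        rwa [Real.norm_eq_abs]
end

section
/- Let Γ be an index set, p ∈ [1,∞), and consider ℓ_p(Γ). Let D₀ be a subgroup of ℓ_p(Γ) whose elements are all supported in a subset Γ₀ ⊆ Γ, let u ∈ ℓ_p(Γ) be supported in Γ₀, and let γ̃ ∈ Γ \ Γ₀. Suppose D₀ is 2^{1/p}-separated and ||u - d||_p > 1 for all d ∈ D₀. Then the subgroup D = D₀ + (u + e_{γ̃})ℤ is 2^{1/p}-separated, where e_{γ̃} is the standard unit vector at coordinate γ̃. Moreover, if p > 1, and D₀ is (2^{1/p}+)-separated (distance strictly greater than 2^{1/p}), then D is (2^{1/p}+)-separated. -/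
set_option maxHeartbeats 1000000


open scoped ENNReal

/-- Key computation: if `y ∈ ℓ_p(Γ)` vanishes at `γt`, then
`‖y + c • e_γt‖ ^ p = ‖y‖ ^ p + |c| ^ p`. -/
theorem aux_norm_single {Γ : Type*} [DecidableEq Γ] (p : ℝ≥0∞) [Fact (1 ≤ p)]
    (hpr : 0 < p.toReal) (y : lp (fun _ : Γ => ℝ) p) (γt : Γ)
    (hy : (y : ∀ _ : Γ, ℝ) γt = 0) (c : ℝ) :
    ‖y + lp.single p γt c‖ ^ p.toReal = ‖y‖ ^ p.toReal + |c| ^ p.toReal := by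
  have hs := lp.hasSum_norm hpr y
  have h2 := hs.update γt (|c| ^ p.toReal)
  have h3 := lp.hasSum_norm hpr (y + lp.single p γt c)
  have h4 : HasSum
      (fun γ => ‖((y + lp.single p γt c : lp (fun _ : Γ => ℝ) p) : ∀ _ : Γ, ℝ) γ‖ ^ p.toReal)
      (‖y‖ ^ p.toReal + |c| ^ p.toReal) := by
    have heq : (fun γ => ‖((y + lp.single p γt c : lp (fun _ : Γ => ℝ) p) :
          ∀ _ : Γ, ℝ) γ‖ ^ p.toReal) =
        Function.update (fun γ => ‖(y : ∀ _ : Γ, ℝ) γ‖ ^ p.toReal) γt (|c| ^ p.toReal) := by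
      funext γ
      by_cases h : γ = γt
      · subst h
        simp [lp.coeFn_add, lp.single_apply_self, hy, Real.norm_eq_abs]
      · simp [Function.update_of_ne h, lp.coeFn_add, lp.single_apply_ne p γt _ h, Pi.single_eq_of_ne h]
    have hval : |c| ^ p.toReal - ‖(y : ∀ _ : Γ, ℝ) γt‖ ^ p.toReal + ‖y‖ ^ p.toReal =
        ‖y‖ ^ p.toReal + |c| ^ p.toReal := by
      rw [hy, norm_zero, Real.zero_rpow hpr.ne']; ring
    rw [heq, ← hval]
    exact h2
  exact h3.unique h4

/-- The key inductive step in `ℓ_p(Γ)`: if the subgroup `D₀` and the vector `u`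
are supported in `Γ₀`, `γ̃ ∉ Γ₀`, `D₀` is `2^{1/p}`-separated and `‖u - d‖ > 1`
for all `d ∈ D₀`, then `D₀ + (u + e_γ̃)ℤ` is `2^{1/p}`-separated; moreover, if
`p > 1` and `D₀` is `(2^{1/p}+)`-separated, so is `D₀ + (u + e_γ̃)ℤ`. -/
theorem stmt_16 {Γ : Type*} [DecidableEq Γ] (p : ℝ≥0∞) [Fact (1 ≤ p)] (hp : p ≠ ⊤)
    (D₀ : AddSubgroup (lp (fun _ : Γ => ℝ) p)) (Γ₀ : Set Γ)
    (u : lp (fun _ : Γ => ℝ) p) (γt : Γ) (hγt : γt ∉ Γ₀)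
    (hD₀supp : ∀ d ∈ D₀, ∀ γ ∉ Γ₀, (d : ∀ _ : Γ, ℝ) γ = 0)
    (husupp : ∀ γ ∉ Γ₀, (u : ∀ _ : Γ, ℝ) γ = 0)
    (hsep : ∀ d ∈ D₀, ∀ h ∈ D₀, d ≠ h → (2 : ℝ) ^ (1 / p.toReal) ≤ ‖d - h‖)
    (hfar : ∀ d ∈ D₀, 1 < ‖u - d‖) :
    (∀ d ∈ D₀, ∀ n : ℤ, ∀ d' ∈ D₀, ∀ m : ℤ,
      d + n • (u + lp.single p γt 1) ≠ d' + m • (u + lp.single p γt 1) →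
      (2 : ℝ) ^ (1 / p.toReal)
        ≤ ‖(d + n • (u + lp.single p γt 1)) - (d' + m • (u + lp.single p γt 1))‖) ∧
    ((1 < p ∧ ∀ d ∈ D₀, ∀ h ∈ D₀, d ≠ h → (2 : ℝ) ^ (1 / p.toReal) < ‖d - h‖) →
      ∀ d ∈ D₀, ∀ n : ℤ, ∀ d' ∈ D₀, ∀ m : ℤ,
      d + n • (u + lp.single p γt 1) ≠ d' + m • (u + lp.single p γt 1) →
      (2 : ℝ) ^ (1 / p.toReal)
        < ‖(d + n • (u + lp.single p γt 1)) - (d' + m • (u + lp.single p γt 1))‖) := by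
  have hpr1 : 1 ≤ p.toReal := by
    rw [← ENNReal.toReal_one]
    exact ENNReal.toReal_mono hp (Fact.out)
  have hpr0 : 0 < p.toReal := lt_of_lt_of_le one_pos hpr1
  set v : lp (fun _ : Γ => ℝ) p := u + lp.single p γt 1 with hv
  -- key estimate in the case `k ≠ 0`
  have key : ∀ d ∈ D₀, ∀ k : ℤ, k ≠ 0 →
      ((2 : ℝ) ≤ ‖d + k • v‖ ^ p.toReal ∧
        (1 < p.toReal → (2 : ℝ) < ‖d + k • v‖ ^ p.toReal)) := by
    intro d hd k hk
    have hzs : ((k : ℝ) • v : lp (fun _ : Γ => ℝ) p) = k • v := Int.cast_smul_eq_zsmul ℝ k v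
    have hx : d + k • v = (d + (k : ℝ) • u) + lp.single p γt (k : ℝ) := by
      rw [← hzs, hv, smul_add]
      have : ((k : ℝ) • lp.single p γt (1 : ℝ) : lp (fun _ : Γ => ℝ) p) =
          lp.single p γt (k : ℝ) := by
        rw [← lp.single_smul, smul_eq_mul, mul_one]
      rw [this]
      abel
    set y : lp (fun _ : Γ => ℝ) p := d + (k : ℝ) • u with hy
    have hy0 : (y : ∀ _ : Γ, ℝ) γt = 0 := by
      have h1 := hD₀supp d hd γt hγt
      have h2 := husupp γt hγt
      rw [hy, lp.coeFn_add, lp.coeFn_smul]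
      show (d : ∀ _ : Γ, ℝ) γt + (k : ℝ) • (u : ∀ _ : Γ, ℝ) γt = 0
      simp [hy, lp.coeFn_add, lp.coeFn_smul, h1, h2]
    have hnorm : ‖d + k • v‖ ^ p.toReal = ‖y‖ ^ p.toReal + |(k : ℝ)| ^ p.toReal := by
      rw [hx]
      exact aux_norm_single p hpr0 y γt hy0 (k : ℝ)
    by_cases h1 : k = 1 ∨ k = -1
    · -- |k| = 1 : strict inequality always
      have hyfar : 1 < ‖y‖ := by
        rcases h1 with h | h
        · have : y = u - (-d) := by
            rw [hy, h]
            push_cast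
            module
          rw [this]
          exact hfar (-d) (neg_mem hd)
        · have : y = -(u - d) := by
            rw [hy, h]
            push_cast
            module
          rw [this, norm_neg]
          exact hfar d hd
      have h1y : 1 < ‖y‖ ^ p.toReal :=
        (Real.one_lt_rpow_iff_of_pos (lt_trans one_pos hyfar)).mpr (Or.inl ⟨hyfar, hpr0⟩)
      have habs : |(k : ℝ)| ^ p.toReal = 1 := by
        rcases h1 with h | h <;> rw [h] <;> norm_num
      constructor
      · rw [hnorm, habs]; linarith
      · intro _; rw [hnorm, habs]; linarith
    · -- |k| ≥ 2
      have h2k : (2 : ℝ) ≤ |(k : ℝ)| := by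
        push_neg at h1
        obtain ⟨h1a, h1b⟩ := h1
        have h2i : (2 : ℤ) ≤ |k| := by
          rcases le_or_gt 0 k with h | h
          · rw [abs_of_nonneg h]; omega
          · rw [abs_of_neg h]; omega
        calc (2 : ℝ) = ((2 : ℤ) : ℝ) := by norm_num
          _ ≤ ((|k| : ℤ) : ℝ) := by exact_mod_cast h2i
          _ = |(k : ℝ)| := Int.cast_abs
      have hk2 : (2 : ℝ) ^ p.toReal ≤ |(k : ℝ)| ^ p.toReal :=
        Real.rpow_le_rpow (by norm_num) h2k hpr0.le
      have h2p : (2 : ℝ) ≤ 2 ^ p.toReal := by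
        calc (2 : ℝ) = 2 ^ (1 : ℝ) := (Real.rpow_one 2).symm
          _ ≤ 2 ^ p.toReal := (Real.rpow_le_rpow_left_iff one_lt_two).mpr hpr1
      have hyn : 0 ≤ ‖y‖ ^ p.toReal := Real.rpow_nonneg (norm_nonneg _) _
      constructor
      · rw [hnorm]; linarith
      · intro hlt
        have h2p' : (2 : ℝ) < 2 ^ p.toReal := by
          calc (2 : ℝ) = 2 ^ (1 : ℝ) := (Real.rpow_one 2).symm
            _ < 2 ^ p.toReal := (Real.rpow_lt_rpow_left_iff one_lt_two).mpr hlt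
        rw [hnorm]; linarith
  -- conversion lemmas
  have conv : ∀ x : lp (fun _ : Γ => ℝ) p,
      (2 : ℝ) ≤ ‖x‖ ^ p.toReal → (2 : ℝ) ^ (1 / p.toReal) ≤ ‖x‖ := by
    intro x h
    have hxe : ‖x‖ = (‖x‖ ^ p.toReal) ^ (1 / p.toReal) := by
      rw [one_div, Real.rpow_rpow_inv (norm_nonneg _) hpr0.ne']
    rw [hxe]
    exact Real.rpow_le_rpow (by norm_num) h (by positivity)
  have conv_lt : ∀ x : lp (fun _ : Γ => ℝ) p,
      (2 : ℝ) < ‖x‖ ^ p.toReal → (2 : ℝ) ^ (1 / p.toReal) < ‖x‖ := by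
    intro x h
    have hxe : ‖x‖ = (‖x‖ ^ p.toReal) ^ (1 / p.toReal) := by
      rw [one_div, Real.rpow_rpow_inv (norm_nonneg _) hpr0.ne']
    rw [hxe]
    exact Real.rpow_lt_rpow (by norm_num) h (by positivity)
  have hdiff : ∀ (d d' : lp (fun _ : Γ => ℝ) p) (n m : ℤ),
      (d + n • v) - (d' + m • v) = (d - d') + (n - m) • v := by
    intro d d' n m
    rw [sub_zsmul]
    abel
  constructor
  · intro d hd n d' hd' m hne
    rw [hdiff]
    by_cases hnm : n = m
    · have hdd : d ≠ d' := by
        intro h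
        exact hne (by rw [h, hnm])
      rw [hnm, sub_self, zero_zsmul, add_zero]
      exact hsep d hd d' hd' hdd
    · exact conv _ ((key (d - d') (sub_mem hd hd') (n - m) (sub_ne_zero.mpr hnm)).1)
  · rintro ⟨hp1, hsep'⟩ d hd n d' hd' m hne
    have hpr1' : 1 < p.toReal := by
      have := ENNReal.toReal_strict_mono hp hp1
      rwa [ENNReal.toReal_one] at this
    rw [hdiff]
    by_cases hnm : n = m
    · have hdd : d ≠ d' := by
        intro h
        exact hne (by rw [h, hnm])
      rw [hnm, sub_self, zero_zsmul, add_zero]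
      exact hsep' d hd d' hd' hdd
    · exact conv_lt _ ((key (d - d') (sub_mem hd hd') (n - m) (sub_ne_zero.mpr hnm)).2 hpr1')
end
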